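/- Let V be an intuitionistic computability model. For every formula A(y, z̄) of the form ∀x̄(B(y,x̄,z̄) → C(y,x̄,z̄)) there exist unary V-functions g and h such that for every evaluation f with domain M, all parameters b̄ ∈ M, and every natural number e: (a) if e realizes ∀y A(y,b̄) (in the sense of the universally quantified implication clause) then g(e) is defined, g(e) ∈ I₁, and for every a ∈ M, φ_{g(e)}(a) is defined and realizes A(a,b̄); (b) conversely, if e ∈ I₁ and for every a ∈ M, φ_e(a) is defined and realizes A(a,b̄), then h(e) is defined and realizes ∀y A(y,b̄). -/

import Mathlib

namespace GenReal

/-- An `n`-ary partial number-theoretic function. -/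
abbrev PFn (n : ℕ) := (Fin n → ℕ) → Part ℕ

/-- Combine a vector of partial values into a partial vector of values. -/
def vecPart {n : ℕ} (f : Fin n → Part ℕ) : Part (Fin n → ℕ) :=
  ⟨∀ i, (f i).Dom, fun h i => (f i).get (h i)⟩

/-- A set `V` of partial number-theoretic functions presented by a numbering:
a pairing bijection `c` with unpairing functions `p1`, `p2`, index sets `Idx n ⊆ ℕ`
and for each arity `n` a numbering `e ↦ φ n e` of the `n`-ary `V`-functions. -/
structure Numbering where
  c : ℕ → ℕ → ℕ
  p1 : ℕ → ℕ
  p2 : ℕ → ℕ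
  cBij : Function.Bijective fun p : ℕ × ℕ => c p.1 p.2
  p1c : ∀ a b, p1 (c a b) = a
  p2c : ∀ a b, p2 (c a b) = b
  Idx : ℕ → Set ℕ
  φ : (n : ℕ) → ℕ → PFn n

namespace Numbering

variable (V : Numbering)

/-- `p` is an `n`-ary `V`-function, i.e. it has an index. -/
def IsV (n : ℕ) (p : PFn n) : Prop := ∃ e ∈ V.Idx n, ∀ x, V.φ n e x = p x

/-- (BF): projections, the pairing `c` and the unpairings `p1`, `p2` are `V`-functions. -/
def BF : Prop :=
  (∀ (n : ℕ) (i : Fin n), V.IsV n fun x => Part.some (x i)) ∧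
  (V.IsV 2 fun x => Part.some (V.c (x 0) (x 1))) ∧
  (V.IsV 1 fun x => Part.some (V.p1 (x 0))) ∧
  (V.IsV 1 fun x => Part.some (V.p2 (x 0)))

/-- (Cm): composition of `V`-functions is a `V`-function, with an index obtainable
by a `V`-function. -/
def Cm : Prop :=
  ∀ (n : ℕ) (m : Fin n → ℕ),
    ∃ s : PFn (n + 1), V.IsV (n + 1) s ∧
      ∀ e ∈ V.Idx n, ∀ es : Fin n → ℕ, (∀ i, es i ∈ V.Idx (m i)) →
        ∃ v, s (Fin.cons e es) = Part.some v ∧ v ∈ V.Idx (Finset.univ.sup m) ∧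
          ∀ x : Fin (Finset.univ.sup m) → ℕ,
            V.φ (Finset.univ.sup m) v x =
              (vecPart fun i => V.φ (m i) (es i)
                  fun j => x (Fin.castLE (Finset.le_sup (Finset.mem_univ i)) j)).bind
                (V.φ n e)

/-- (Cn): every constant (0-ary) function is a `V`-function with an index obtainable
by a `V`-function. -/
def Cn : Prop :=
  ∃ s : PFn 1, V.IsV 1 s ∧
    ∀ k : ℕ, ∃ v, s ![k] = Part.some v ∧ v ∈ V.Idx 0 ∧
      ∀ x : Fin 0 → ℕ, V.φ 0 v x = Part.some k

/-- (Cs): an index of a "conditional function" (case distinction on whether the last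
argument is zero) can be obtained by a `V`-function. -/
def Cs : Prop :=
  ∀ n : ℕ, ∃ s : PFn 2, V.IsV 2 s ∧
    ∀ e₁ ∈ V.Idx n, ∀ e₂ ∈ V.Idx n,
      ∃ v, s ![e₁, e₂] = Part.some v ∧ v ∈ V.Idx (n + 1) ∧
        ∀ x : Fin (n + 1) → ℕ,
          V.φ (n + 1) v x =
            if x (Fin.last n) = 0 then V.φ n e₁ (Fin.init x) else V.φ n e₂ (Fin.init x)

/-- `V` is a basic computability model. -/
def Basic : Prop := V.BF ∧ V.Cm ∧ V.Cn ∧ V.Cs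

/-- `u` is overuniversal for the set of all `n`-ary `V`-functions. -/
def Overuniversal (n : ℕ) (u : PFn (n + 1)) : Prop :=
  ∀ e ∈ V.Idx n, ∀ a : Fin n → ℕ, (V.φ n e a).Dom → u (Fin.cons e a) = V.φ n e a

/-- (U): there is an overuniversal `V`-function for the set of all unary `V`-functions. -/
def U : Prop := ∃ u : PFn 2, V.IsV 2 u ∧ V.Overuniversal 1 u

/-- `V` is an intuitionistic computability model. -/
def Intu : Prop := V.Basic ∧ V.U

end Numbering

end GenReal

namespace GenReal

/-- Formulas of the language of IPC (predicate symbols of every arity indexed by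
naturals; terms are variables, indexed by naturals). -/
inductive Fml where
  | bot : Fml
  | top : Fml
  | pred (P : ℕ) (n : ℕ) (ts : Fin n → ℕ) : Fml
  | and (A B : Fml) : Fml
  | or (A B : Fml) : Fml
  | imp (A B : Fml) : Fml
  | all (x : ℕ) (A : Fml) : Fml
  | ex (x : ℕ) (A : Fml) : Fml

namespace Fml

/-- Size of a formula (used as fuel for the realizability recursion). -/
def size : Fml → ℕ
  | bot => 1
  | top => 1
  | pred _ _ _ => 1
  | and A B => A.size + B.size + 1
  | or A B => A.size + B.size + 1
  | imp A B => A.size + B.size + 1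
  | all _ A => A.size + 1
  | ex _ A => A.size + 1

/-- Strip the maximal prefix of universal quantifiers. -/
def strip : Fml → List ℕ × Fml
  | all x A => (x :: (strip A).1, (strip A).2)
  | A => ([], A)

end Fml

/-- `x` occurs free in a formula. -/
def FreeIn (x : ℕ) : Fml → Prop
  | Fml.bot => False
  | Fml.top => False
  | Fml.pred _ _ ts => ∃ i, ts i = x
  | Fml.and A B => FreeIn x A ∨ FreeIn x B
  | Fml.or A B => FreeIn x A ∨ FreeIn x B
  | Fml.imp A B => FreeIn x A ∨ FreeIn x B
  | Fml.all z A => x ≠ z ∧ FreeIn x A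
  | Fml.ex z A => x ≠ z ∧ FreeIn x A

/-- A sentence: a formula with no free variables. -/
def Fml.Closed (A : Fml) : Prop := ∀ x, ¬ FreeIn x A

/-- An evaluation: each `n`-ary predicate symbol gets a generalized predicate,
i.e. a map from `n`-tuples to sets of natural numbers. -/
abbrev Eval := ℕ → (n : ℕ) → (Fin n → ℕ) → Set ℕ

/-- Update an environment at a list of variables by a list of values
(later, i.e. inner, updates override earlier ones). -/
def updEnv : (ℕ → ℕ) → List ℕ → List ℕ → (ℕ → ℕ)
  | ρ, x :: xs, a :: as => updEnv (Function.update ρ x a) xs as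
  | ρ, _, _ => ρ

/-- Fueled definition of `V`-realizability of a formula over an evaluation `f`
with domain `M`, relative to an environment `ρ` assigning elements of `M`
to the variables. -/
def RzF (V : Numbering) (M : Set ℕ) (f : Eval) : ℕ → Fml → (ℕ → ℕ) → ℕ → Prop
  | 0, _, _, _ => False
  | _ + 1, Fml.bot, _, _ => False
  | _ + 1, Fml.top, _, _ => True
  | _ + 1, Fml.pred P n ts, ρ, e => e ∈ f P n fun i => ρ (ts i)
  | k + 1, Fml.and A B, ρ, e => RzF V M f k A ρ (V.p1 e) ∧ RzF V M f k B ρ (V.p2 e)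
  | k + 1, Fml.or A B, ρ, e =>
      (V.p1 e = 0 ∧ RzF V M f k A ρ (V.p2 e)) ∨ (V.p1 e = 1 ∧ RzF V M f k B ρ (V.p2 e))
  | k + 1, Fml.imp A B, ρ, e =>
      e ∈ V.Idx 1 ∧ ∀ s : ℕ, RzF V M f k A ρ s →
        ∃ v, V.φ 1 e ![s] = Part.some v ∧ RzF V M f k B ρ v
  | k + 1, Fml.ex x A, ρ, e =>
      V.p1 e ∈ M ∧ RzF V M f k A (Function.update ρ x (V.p1 e)) (V.p2 e)
  | k + 1, Fml.all x A, ρ, e =>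
      match Fml.strip A with
      | (ys, Fml.imp B C) =>
          e ∈ V.Idx ((x :: ys).length + 1) ∧
            ∀ a : Fin (x :: ys).length → ℕ, (∀ i, a i ∈ M) → ∀ s : ℕ,
              RzF V M f k B (updEnv ρ (x :: ys) (List.ofFn a)) s →
                ∃ v, V.φ ((x :: ys).length + 1) e (Fin.snoc a s) = Part.some v ∧
                  RzF V M f k C (updEnv ρ (x :: ys) (List.ofFn a)) v
      | (ys, D) =>
          e ∈ V.Idx ((x :: ys).length + 1) ∧
            ∀ a : Fin (x :: ys).length → ℕ, (∀ i, a i ∈ M) → ∀ s : ℕ,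
              ∃ v, V.φ ((x :: ys).length + 1) e (Fin.snoc a s) = Part.some v ∧
                RzF V M f k D (updEnv ρ (x :: ys) (List.ofFn a)) v

/-- `e` `V`-realizes the formula `A` on the evaluation `f` with domain `M`,
relative to the environment `ρ`. -/
def Rz (V : Numbering) (M : Set ℕ) (f : Eval) (A : Fml) (ρ : ℕ → ℕ) (e : ℕ) : Prop :=
  RzF V M f (A.size + 1) A ρ e

end GenReal

namespace GenReal

lemma vecPart_eq_some {n : ℕ} {f : Fin n → Part ℕ} {g : Fin n → ℕ}
    (h : ∀ i, f i = Part.some (g i)) : vecPart f = Part.some g := by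
  have hdom : ∀ i, (f i).Dom := fun i => by rw [h i]; trivial
  apply Part.ext'
  · exact iff_of_true hdom trivial
  · intro h1 h2
    funext i
    exact Part.get_eq_of_mem (by rw [h i]; exact Part.mem_some _) _

lemma cm' (V : Numbering) (hcm : V.Cm) (n r : ℕ) (m : Fin n → ℕ)
    (hr : Finset.univ.sup m = r) :
    ∃ s : PFn (n + 1), V.IsV (n + 1) s ∧
      ∀ e ∈ V.Idx n, ∀ es : Fin n → ℕ, (∀ i, es i ∈ V.Idx (m i)) →
        ∃ v, s (Fin.cons e es) = Part.some v ∧ v ∈ V.Idx r ∧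
          ∀ x : Fin r → ℕ,
            V.φ r v x =
              (vecPart fun i => V.φ (m i) (es i)
                  fun j => x (Fin.castLE (hr ▸ Finset.le_sup (Finset.mem_univ i)) j)).bind
                (V.φ n e) := by
  subst hr
  exact hcm n m

lemma sup_const_fin (n k : ℕ) : (Finset.univ.sup fun _ : Fin (n + 1) => k) = k :=
  le_antisymm (Finset.sup_le fun _ _ => le_rfl)
    (Finset.le_sup (f := fun _ : Fin (n + 1) => k) (Finset.mem_univ 0))

lemma castLE_self {k : ℕ} (h : k ≤ k) (j : Fin k) : Fin.castLE h j = j := Fin.ext rfl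

lemma comp1 (V : Numbering) (hcm : V.Cm) (n k : ℕ) (F : PFn (n + 1))
    (hF : V.IsV (n + 1) F) (G : Fin (n + 1) → PFn k) (hG : ∀ i, V.IsV k (G i)) :
    V.IsV k (fun x => (vecPart fun i => G i x).bind F) := by
  obtain ⟨s, _, hs⟩ := cm' V hcm (n + 1) k (fun _ => k) (sup_const_fin n k)
  obtain ⟨eF, heF, heFeq⟩ := hF
  choose eg hegI hegEq using hG
  obtain ⟨v, _, hvI, hveq⟩ := hs eF heF eg hegI
  refine ⟨v, hvI, fun x => ?_⟩
  rw [hveq]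
  simp only [castLE_self, hegEq, funext heFeq]
lemma liftIsV (V : Numbering) (hcs : V.Cs) (k : ℕ) (F : PFn k) (hF : V.IsV k F) :
    V.IsV (k + 1) fun x => F (Fin.init x) := by
  obtain ⟨s, _, hs⟩ := hcs k
  obtain ⟨e, heI, heq⟩ := hF
  obtain ⟨v, _, hvI, hveq⟩ := hs e heI e heI
  exact ⟨v, hvI, fun x => by rw [hveq]; split <;> rw [heq]⟩

lemma vec1_eq (a : ℕ) : (![a] : Fin 1 → ℕ) = fun _ => a := by
  funext i
  simp [Subsingleton.elim i 0]

/-- A `V`-function producing, for every `a`, an index of the `j`-ary constant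
function with value `a`. -/
lemma constIdxF (V : Numbering) (hB : V.Basic) (j : ℕ) :
    ∃ cf : PFn 1, V.IsV 1 cf ∧ ∀ a : ℕ, ∃ v, cf ![a] = Part.some v ∧ v ∈ V.Idx j ∧
      ∀ x : Fin j → ℕ, V.φ j v x = Part.some a := by
  induction j with
  | zero => exact hB.2.2.1
  | succ j ih =>
    obtain ⟨cf, hcfV, hcf⟩ := ih
    obtain ⟨sc, hscV, hsc⟩ := hB.2.2.2 j
    refine ⟨fun x => (vecPart fun _ : Fin 1 => cf x).bind
        (fun y => (vecPart fun _ : Fin 2 => Part.some (y 0)).bind sc), ?_, ?_⟩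
    · exact comp1 V hB.2.1 0 1 _
        (comp1 V hB.2.1 1 1 sc hscV _ (fun _ => hB.1.1 1 0)) _ (fun _ => hcfV)
    · intro a
      obtain ⟨w, hw1, hw2, hw3⟩ := hcf a
      obtain ⟨v, hv1, hv2, hv3⟩ := hsc w hw2 w hw2
      refine ⟨v, ?_, hv2, ?_⟩
      · beta_reduce
        rw [vecPart_eq_some (g := fun _ => w) fun i => hw1,
          Part.bind_some, vecPart_eq_some (g := fun _ => w) fun i => rfl, Part.bind_some]
        rw [show (fun _ : Fin 2 => w) = ![w, w] by funext i; fin_cases i <;> rfl]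
        exact hv1
      · intro x
        rw [hv3]
        split <;> rw [hw3]
lemma constIsV (V : Numbering) (hB : V.Basic) (j c : ℕ) :
    V.IsV j fun _ => Part.some c := by
  obtain ⟨cf, _, hcf⟩ := constIdxF V hB j
  obtain ⟨v, _, hv2, hv3⟩ := hcf c
  exact ⟨v, hv2, fun x => hv3 x⟩
lemma cons_vec1 (e a : ℕ) : (Fin.cons e ![a] : Fin 2 → ℕ) = ![e, a] := rfl

/-- s-m-n: a binary `V`-function computing, from an index `e` of a `(k+2)`-ary
`V`-function and a value `a`, an index of the `(k+1)`-ary function obtained by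
fixing the first argument to `a`. -/
lemma smn (V : Numbering) (hB : V.Basic) (k : ℕ) :
    ∃ S : PFn 2, V.IsV 2 S ∧ ∀ e ∈ V.Idx (k + 2), ∀ a : ℕ,
      ∃ v, S ![e, a] = Part.some v ∧ v ∈ V.Idx (k + 1) ∧
        ∀ x : Fin (k + 1) → ℕ, V.φ (k + 1) v x = V.φ (k + 2) e (Fin.cons a x) := by
  obtain ⟨s, hsV, hs⟩ := cm' V hB.2.1 (k + 2) (k + 1) (fun _ => k + 1)
    (sup_const_fin (k + 1) (k + 1))
  obtain ⟨cf, hcfV, hcf⟩ := constIdxF V hB (k + 1)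
  choose pj hpjI hpjEq using hB.1.1 (k + 1)
  set G : Fin (k + 3) → PFn 2 :=
    Fin.cons (α := fun _ => PFn 2) (fun y => Part.some (y 0))
      (Fin.cons (α := fun _ => PFn 2)
        (fun y => (vecPart fun _ : Fin 1 => Part.some (y 1)).bind cf)
        (fun i _ => Part.some (pj i))) with hG
  have hG0 : ∀ y, G 0 y = Part.some (y 0) := by intro y; rw [hG, Fin.cons_zero]
  have hG1 : ∀ y, G (Fin.succ 0) y =
      (vecPart fun _ : Fin 1 => Part.some (y 1)).bind cf := by
    intro y; rw [hG, Fin.cons_succ, Fin.cons_zero]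
  have hGs : ∀ (i : Fin (k + 1)) y, G (Fin.succ (Fin.succ i)) y = Part.some (pj i) := by
    intro i y; rw [hG, Fin.cons_succ, Fin.cons_succ]
  refine ⟨fun x => (vecPart fun i => G i x).bind s, ?_, ?_⟩
  · refine comp1 V hB.2.1 (k + 2) 2 s hsV G ?_
    intro i
    refine Fin.cases ?_ (fun i' => Fin.cases ?_ (fun i'' => ?_) i') i
    · exact ⟨_, (hB.1.1 2 0).choose_spec.1, fun y => by
        rw [(hB.1.1 2 0).choose_spec.2 y, hG0]⟩
    · have := comp1 V hB.2.1 0 2 cf hcfV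
        (fun _ y => Part.some (y 1)) (fun _ => hB.1.1 2 1)
      obtain ⟨w, hwI, hweq⟩ := this
      exact ⟨w, hwI, fun y => by rw [hweq y, hG1]⟩
    · obtain ⟨w, hwI, hweq⟩ := constIsV V hB 2 (pj i'')
      exact ⟨w, hwI, fun y => by rw [hweq y, hGs]⟩
  · intro e heI a
    obtain ⟨cv, hcv1, hcv2, hcv3⟩ := hcf a
    have hvec : (vecPart fun i => G i ![e, a]) =
        Part.some (Fin.cons e (Fin.cons cv pj)) := by
      apply vecPart_eq_some
      intro i
      refine Fin.cases ?_ (fun i' => Fin.cases ?_ (fun i'' => ?_) i') i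
      · rw [hG0, Fin.cons_zero]; rfl
      · rw [hG1, Fin.cons_succ, Fin.cons_zero]
        simp only [Matrix.cons_val_one, Matrix.head_cons, Matrix.cons_val_zero]
        rw [vecPart_eq_some (f := fun _ : Fin 1 => Part.some a) (g := fun _ => a)
          fun _ => rfl, Part.bind_some]
        rw [show (fun _ : Fin 1 => a) = ![a] from (vec1_eq a).symm]
        exact hcv1
      · rw [hGs, Fin.cons_succ, Fin.cons_succ]
    have hes : ∀ i, (Fin.cons cv pj : Fin (k + 2) → ℕ) i ∈
        V.Idx ((fun _ : Fin (k + 2) => k + 1) i) := by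
      intro i
      refine Fin.cases ?_ (fun i'' => ?_) i
      · rw [Fin.cons_zero]; exact hcv2
      · rw [Fin.cons_succ]; exact hpjI i''
    obtain ⟨v, hv1, hv2, hv3⟩ := hs e heI (Fin.cons cv pj) hes
    refine ⟨v, ?_, hv2, ?_⟩
    · beta_reduce
      rw [hvec, Part.bind_some]
      exact hv1
    · intro x
      rw [hv3]
      rw [vecPart_eq_some (g := Fin.cons a x) ?_, Part.bind_some]
      intro i
      refine Fin.cases ?_ (fun i'' => ?_) i
      · rw [Fin.cons_zero, Fin.cons_zero]
        exact hcv3 _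
      · rw [Fin.cons_succ, Fin.cons_succ, hpjEq]
        simp [castLE_self, Fin.cons_succ]
lemma tail_snoc {n : ℕ} (p : Fin (n + 1) → ℕ) (x : ℕ) :
    Fin.tail (Fin.snoc p x : Fin (n + 2) → ℕ) = (Fin.snoc (Fin.tail p) x : Fin (n + 1) → ℕ) := by
  have h : Fin.cons (p 0) ((Fin.snoc (Fin.tail p) x : Fin (n + 1) → ℕ)) =
      (Fin.snoc p x : Fin (n + 2) → ℕ) := by
    rw [Fin.cons_snoc_eq_snoc_cons, Fin.cons_self_tail]
  rw [← h, Fin.tail_cons]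

/-- Overuniversal `V`-functions of every positive arity. -/
lemma overuniv (V : Numbering) (hV : V.Intu) (n : ℕ) :
    ∃ un : PFn (n + 2), V.IsV (n + 2) un ∧ V.Overuniversal (n + 1) un := by
  induction n with
  | zero => exact hV.2
  | succ n ih =>
    obtain ⟨un, hunV, hunO⟩ := ih
    obtain ⟨S, hSV, hS⟩ := smn V hV.1 n
    have h12 : (1 : Fin 2) = Fin.succ 0 := Fin.succ_zero_eq_one.symm
    have h1n : (1 : Fin (n + 3)) = Fin.succ 0 := Fin.succ_zero_eq_one.symm
    set UG : Fin 2 → PFn (n + 3) :=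
      Fin.cons (α := fun _ => PFn (n + 3)) (fun z => Part.some (z 0))
        (Fin.cons (α := fun _ => PFn (n + 3)) (fun z => Part.some (z 1)) Fin.elim0)
      with hUG
    have hUG0 : ∀ z, UG 0 z = Part.some (z 0) := fun z => by rw [hUG, Fin.cons_zero]
    have hUG1 : ∀ z, UG 1 z = Part.some (z 1) := fun z => by
      rw [hUG, h12, Fin.cons_succ, Fin.cons_zero]
    set Sc : PFn (n + 3) := fun z => (vecPart fun i => UG i z).bind S with hSc
    have hScV : V.IsV (n + 3) Sc := by
      refine comp1 V hV.1.2.1 1 (n + 3) S hSV UG ?_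
      intro i
      refine Fin.cases ?_ (fun i' => Fin.cases ?_ (fun i'' => i''.elim0) i') i
      · obtain ⟨w, hwI, hweq⟩ := hV.1.1.1 (n + 3) 0
        exact ⟨w, hwI, fun z => by simp only [hweq, hUG0]⟩
      · obtain ⟨w, hwI, hweq⟩ := hV.1.1.1 (n + 3) 1
        exact ⟨w, hwI, fun z => by simp only [hweq, Fin.succ_zero_eq_one, hUG1]⟩
    have hScEq : ∀ z : Fin (n + 3) → ℕ, Sc z = S ![z 0, z 1] := by
      intro z
      rw [hSc]
      beta_reduce
      rw [vecPart_eq_some (g := ![z 0, z 1]) ?_, Part.bind_some]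
      intro i
      refine Fin.cases ?_ (fun i' => Fin.cases ?_ (fun i'' => i''.elim0) i') i
      · rw [hUG0]; rfl
      · rw [Fin.succ_zero_eq_one, hUG1]; rfl
    set FG : Fin (n + 2) → PFn (n + 3) :=
      Fin.cons (α := fun _ => PFn (n + 3)) Sc
        (fun i => fun z => Part.some (z i.succ.succ)) with hFG
    have hFG0 : FG 0 = Sc := by rw [hFG, Fin.cons_zero]
    have hFGs : ∀ i : Fin (n + 1), FG i.succ = fun z => Part.some (z i.succ.succ) := by
      intro i; rw [hFG, Fin.cons_succ]
    refine ⟨fun z => (vecPart fun i => FG i z).bind un, ?_, ?_⟩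
    · refine comp1 V hV.1.2.1 (n + 1) (n + 3) un hunV FG ?_
      intro i
      refine Fin.cases ?_ (fun i' => ?_) i
      · rw [hFG0]; exact hScV
      · rw [hFGs]; exact hV.1.1.1 (n + 3) i'.succ.succ
    · intro e heI a hdom
      obtain ⟨v, hv1, hv2, hv3⟩ := hS e heI (a 0)
      have hz0 : (Fin.cons e a : Fin (n + 3) → ℕ) 0 = e := Fin.cons_zero _ _
      have hz1 : (Fin.cons e a : Fin (n + 3) → ℕ) 1 = a 0 := by
        rw [h1n, Fin.cons_succ]
      have hvec : (vecPart fun i => FG i (Fin.cons e a)) =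
          Part.some (Fin.cons v (Fin.tail a)) := by
        apply vecPart_eq_some
        intro i
        refine Fin.cases ?_ (fun i' => ?_) i
        · rw [hFG0, Fin.cons_zero, hScEq, hz0, hz1]
          exact hv1
        · rw [hFGs, Fin.cons_succ]
          beta_reduce
          rw [Fin.cons_succ]
          rfl
      beta_reduce
      rw [hvec, Part.bind_some]
      have htail : V.φ (n + 1) v (Fin.tail a) = V.φ (n + 2) e a := by
        rw [hv3, Fin.cons_self_tail]
      rw [hunO v hv2 (Fin.tail a) (by rw [htail]; exact hdom), htail]
lemma size_pos (A : Fml) : 1 ≤ A.size := by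
  cases A <;> simp [Fml.size]

lemma strip_foldr (B C : Fml) : ∀ l : List ℕ,
    Fml.strip (l.foldr Fml.all (B.imp C)) = (l, B.imp C)
  | [] => rfl
  | x :: l => by
    rw [List.foldr_cons]
    show (x :: (Fml.strip (l.foldr Fml.all (B.imp C))).1,
      (Fml.strip (l.foldr Fml.all (B.imp C))).2) = _
    rw [strip_foldr B C l]

lemma strip_size : ∀ A : Fml, (Fml.strip A).1.length + (Fml.strip A).2.size = A.size := by
  intro A
  induction A with
  | all x A ih =>
    show (x :: (Fml.strip A).1).length + (Fml.strip A).2.size = A.size + 1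
    simp only [List.length_cons]
    omega
  | _ => simp [Fml.strip, Fml.size]

/-- Realizability is independent of the fuel, as long as it is at least the size
of the formula. -/
lemma rzf_fuel (V : Numbering) (M : Set ℕ) (f : Eval) :
    ∀ N A, Fml.size A ≤ N → ∀ k₁ k₂, Fml.size A ≤ k₁ → Fml.size A ≤ k₂ →
      ∀ ρ e, (RzF V M f k₁ A ρ e ↔ RzF V M f k₂ A ρ e) := by
  intro N
  induction N with
  | zero => intro A h; have := size_pos A; omega
  | succ N ih =>
    intro A hA k₁ k₂ h1 h2 ρ e
    obtain ⟨k₁, rfl⟩ : ∃ k, k₁ = k + 1 := ⟨k₁ - 1, by have := size_pos A; omega⟩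
    obtain ⟨k₂, rfl⟩ : ∃ k, k₂ = k + 1 := ⟨k₂ - 1, by have := size_pos A; omega⟩
    cases A with
    | bot => rw [RzF, RzF]
    | top => rw [RzF, RzF]
    | pred P n ts => rw [RzF, RzF]
    | and A B =>
      simp only [Fml.size] at hA h1 h2
      have pa := size_pos A; have pb := size_pos B
      rw [RzF, RzF,
        ih A (by omega) k₁ k₂ (by omega) (by omega) ρ (V.p1 e),
        ih B (by omega) k₁ k₂ (by omega) (by omega) ρ (V.p2 e)]
    | or A B =>
      simp only [Fml.size] at hA h1 h2
      have pa := size_pos A; have pb := size_pos B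
      rw [RzF, RzF,
        ih A (by omega) k₁ k₂ (by omega) (by omega) ρ (V.p2 e),
        ih B (by omega) k₁ k₂ (by omega) (by omega) ρ (V.p2 e)]
    | imp A B =>
      simp only [Fml.size] at hA h1 h2
      have pa := size_pos A; have pb := size_pos B
      rw [RzF, RzF]
      have ihA := fun (ρ' : ℕ → ℕ) (w : ℕ) => ih A (by omega) k₁ k₂ (by omega) (by omega) ρ' w
      have ihB := fun (ρ' : ℕ → ℕ) (w : ℕ) => ih B (by omega) k₁ k₂ (by omega) (by omega) ρ' w
      simp only [ihA, ihB]
    | ex x A =>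
      simp only [Fml.size] at hA h1 h2
      rw [RzF, RzF, ih A (by omega) k₁ k₂ (by omega) (by omega)]
    | all x A =>
      simp only [Fml.size] at hA h1 h2
      rcases hst : Fml.strip A with ⟨ys, D⟩
      have hss := strip_size A
      rw [hst] at hss
      simp only at hss
      have gen : ∀ D' : Fml, D'.size ≤ A.size →
          ((e ∈ V.Idx ((x :: ys).length + 1) ∧
            ∀ a : Fin (x :: ys).length → ℕ, (∀ i, a i ∈ M) → ∀ s : ℕ,
              ∃ v, V.φ ((x :: ys).length + 1) e (Fin.snoc a s) = Part.some v ∧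
                RzF V M f k₁ D' (updEnv ρ (x :: ys) (List.ofFn a)) v) ↔
          (e ∈ V.Idx ((x :: ys).length + 1) ∧
            ∀ a : Fin (x :: ys).length → ℕ, (∀ i, a i ∈ M) → ∀ s : ℕ,
              ∃ v, V.φ ((x :: ys).length + 1) e (Fin.snoc a s) = Part.some v ∧
                RzF V M f k₂ D' (updEnv ρ (x :: ys) (List.ofFn a)) v)) := by
        intro D' hD
        have ihD := fun (ρ' : ℕ → ℕ) (w : ℕ) =>
          ih D' (by omega) k₁ k₂ (by omega) (by omega) ρ' w
        simp only [ihD]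
      cases D
      case imp B C =>
        rw [RzF, RzF, hst]
        simp only [Fml.size] at hss
        have pb := size_pos B; have pc := size_pos C
        have ihB := fun (ρ' : ℕ → ℕ) (w : ℕ) =>
          ih B (by omega) k₁ k₂ (by omega) (by omega) ρ' w
        have ihC := fun (ρ' : ℕ → ℕ) (w : ℕ) =>
          ih C (by omega) k₁ k₂ (by omega) (by omega) ρ' w
        simp only [ihB, ihC]
      all_goals (rw [RzF, RzF, hst]; exact gen _ (by omega))
lemma updEnv_nil (ρ : ℕ → ℕ) (as : List ℕ) : updEnv ρ [] as = ρ := by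
  cases as <;> rfl

lemma updEnv_cons (ρ : ℕ → ℕ) (x : ℕ) (xs : List ℕ) (a : ℕ) (as : List ℕ) :
    updEnv ρ (x :: xs) (a :: as) = updEnv (Function.update ρ x a) xs as := rfl

lemma ofFn_cons {n : ℕ} (a : ℕ) (g : Fin n → ℕ) :
    List.ofFn (Fin.cons a g : Fin (n + 1) → ℕ) = a :: List.ofFn g := by
  rw [List.ofFn_succ]
  simp [Fin.cons_succ]

lemma snoc_nil (a : Fin 0 → ℕ) (s : ℕ) : (Fin.snoc a s : Fin 1 → ℕ) = ![s] := by
  funext i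
  have hi : i = Fin.last 0 := Fin.ext (by omega)
  rw [hi, Fin.snoc_last]
  simp

/-- Characterization of realizability for a block formula `∀x̄(B → C)`. -/
lemma blockRz (V : Numbering) (M : Set ℕ) (f : Eval) (B C : Fml) (l : List ℕ)
    (ρ : ℕ → ℕ) (e : ℕ) :
    Rz V M f (l.foldr Fml.all (B.imp C)) ρ e ↔
      (e ∈ V.Idx (l.length + 1) ∧ ∀ a : Fin l.length → ℕ, (∀ i, a i ∈ M) → ∀ s : ℕ,
        Rz V M f B (updEnv ρ l (List.ofFn a)) s →
          ∃ v, V.φ (l.length + 1) e (Fin.snoc a s) = Part.some v ∧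
            Rz V M f C (updEnv ρ l (List.ofFn a)) v) := by
  cases l with
  | nil =>
    simp only [Rz, List.foldr_nil, List.length_nil, updEnv_nil, snoc_nil]
    rw [RzF]
    have pb := size_pos B; have pc := size_pos C
    have hB := fun (ρ' : ℕ → ℕ) (w : ℕ) =>
      rzf_fuel V M f (Fml.size (B.imp C)) B (by simp only [Fml.size]; omega)
        (Fml.size (B.imp C)) (B.size + 1) (by simp only [Fml.size]; omega)
        (by omega) ρ' w
    have hC := fun (ρ' : ℕ → ℕ) (w : ℕ) =>
      rzf_fuel V M f (Fml.size (B.imp C)) C (by simp only [Fml.size]; omega)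
        (Fml.size (B.imp C)) (C.size + 1) (by simp only [Fml.size]; omega)
        (by omega) ρ' w
    simp only [hB, hC]
    constructor
    · rintro ⟨x1, x2⟩
      exact ⟨by simpa using x1, fun a _ => x2⟩
    · rintro ⟨x1, x2⟩
      exact ⟨by simpa using x1, x2 (fun i => i.elim0) (fun i => i.elim0)⟩
  | cons x l' =>
    simp only [Rz, List.foldr_cons]
    rw [RzF, strip_foldr B C l']
    have hsz := strip_size (l'.foldr Fml.all (B.imp C))
    rw [strip_foldr B C l'] at hsz
    simp only [Fml.size] at hsz
    have pb := size_pos B; have pc := size_pos C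
    have hB := fun (ρ' : ℕ → ℕ) (w : ℕ) =>
      rzf_fuel V M f (Fml.size (Fml.all x (l'.foldr Fml.all (B.imp C)))) B
        (by simp only [Fml.size]; omega)
        (Fml.size (Fml.all x (l'.foldr Fml.all (B.imp C)))) (B.size + 1)
        (by simp only [Fml.size]; omega) (by omega) ρ' w
    have hC := fun (ρ' : ℕ → ℕ) (w : ℕ) =>
      rzf_fuel V M f (Fml.size (Fml.all x (l'.foldr Fml.all (B.imp C)))) C
        (by simp only [Fml.size]; omega)
        (Fml.size (Fml.all x (l'.foldr Fml.all (B.imp C)))) (C.size + 1)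
        (by simp only [Fml.size]; omega) (by omega) ρ' w
    simp only [hB, hC, List.length_cons]

/-- Lemma 2, part 1: translation between the block `∀`-clause and
the pointwise clause `r'`, for formulas `A` of the form `∀x̄(B → C)` (`x̄` possibly
empty): there are unary `V`-functions `g`, `h` such that (a) from a realizer `e` of
`∀y A` one obtains `g(e) ∈ I₁` with `φ_{g(e)}(a)` defined and realizing `A(a)` for
all `a ∈ M`; and (b) conversely via `h`. -/
theorem stmt10 (V : Numbering) (hV : V.Intu) (xs : List ℕ) (B C : Fml) (y : ℕ)
    (A : Fml) (hA : A = xs.foldr Fml.all (B.imp C)) :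
    ∃ g h : PFn 1, V.IsV 1 g ∧ V.IsV 1 h ∧
      ∀ (M : Set ℕ), M.Nonempty → ∀ (f : Eval) (ρ : ℕ → ℕ), (∀ x, ρ x ∈ M) →
        ∀ e : ℕ,
          (Rz V M f (Fml.all y A) ρ e →
            ∃ gv, g ![e] = Part.some gv ∧ gv ∈ V.Idx 1 ∧
              ∀ a ∈ M, ∃ v, V.φ 1 gv ![a] = Part.some v ∧
                Rz V M f A (Function.update ρ y a) v) ∧
          ((e ∈ V.Idx 1 ∧ ∀ a ∈ M, ∃ v, V.φ 1 e ![a] = Part.some v ∧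
              Rz V M f A (Function.update ρ y a) v) →
            ∃ hv, h ![e] = Part.some hv ∧ Rz V M f (Fml.all y A) ρ hv) := by
  subst hA
  have hB0 := hV.1
  obtain ⟨u1, hu1V, hu1O⟩ := hV.2
  obtain ⟨uN, huNV, huNO⟩ := overuniv V hV xs.length
  obtain ⟨SN, hSNV, hSN⟩ := smn V hB0 xs.length
  obtain ⟨S1, hS1V, hS1⟩ := smn V hB0 0
  obtain ⟨SN1, hSN1V, hSN1⟩ := smn V hB0 (xs.length + 1)
  obtain ⟨σ, hσI, hσeq⟩ := hSNV
  have h12 : (1 : Fin 2) = Fin.succ 0 := Fin.succ_zero_eq_one.symm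
  have h1n : (1 : Fin (xs.length + 3)) = Fin.succ 0 := Fin.succ_zero_eq_one.symm
  -- the function g
  set gG : Fin 2 → PFn 1 :=
    Fin.cons (α := fun _ => PFn 1) (fun _ => Part.some σ)
      (Fin.cons (α := fun _ => PFn 1) (fun y => Part.some (y 0)) Fin.elim0) with hgG
  have hgG0 : ∀ z, gG 0 z = Part.some σ := fun z => by rw [hgG, Fin.cons_zero]
  have hgG1 : ∀ z, gG 1 z = Part.some (z 0) := fun z => by
    rw [hgG, h12, Fin.cons_succ, Fin.cons_zero]
  set gfun : PFn 1 := fun z => (vecPart fun i => gG i z).bind S1 with hgfun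
  have hgV : V.IsV 1 gfun := by
    refine comp1 V hB0.2.1 1 1 S1 hS1V gG ?_
    intro i
    refine Fin.cases ?_ (fun i' => Fin.cases ?_ (fun i'' => i''.elim0) i') i
    · obtain ⟨w, hwI, hweq⟩ := constIsV V hB0 1 σ
      exact ⟨w, hwI, fun z => by simp only [hweq, hgG0]⟩
    · obtain ⟨w, hwI, hweq⟩ := hB0.1.1 1 0
      exact ⟨w, hwI, fun z => by simp only [hweq, Fin.succ_zero_eq_one, hgG1]⟩
  have hgval : ∀ e : ℕ, gfun ![e] = S1 ![σ, e] := by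
    intro e
    rw [hgfun]
    beta_reduce
    rw [vecPart_eq_some (g := ![σ, e]) ?_, Part.bind_some]
    intro i
    refine Fin.cases ?_ (fun i' => Fin.cases ?_ (fun i'' => i''.elim0) i') i
    · rw [hgG0]; rfl
    · rw [Fin.succ_zero_eq_one, hgG1]; rfl
  -- the function h
  set UG : Fin 2 → PFn (xs.length + 3) :=
    Fin.cons (α := fun _ => PFn (xs.length + 3)) (fun z => Part.some (z 0))
      (Fin.cons (α := fun _ => PFn (xs.length + 3)) (fun z => Part.some (z 1)) Fin.elim0)
    with hUG
  have hUG0 : ∀ z, UG 0 z = Part.some (z 0) := fun z => by rw [hUG, Fin.cons_zero]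
  have hUG1 : ∀ z, UG 1 z = Part.some (z 1) := fun z => by
    rw [hUG, h12, Fin.cons_succ, Fin.cons_zero]
  set Uc : PFn (xs.length + 3) := fun z => (vecPart fun i => UG i z).bind u1 with hUc
  have hUcV : V.IsV (xs.length + 3) Uc := by
    refine comp1 V hB0.2.1 1 (xs.length + 3) u1 hu1V UG ?_
    intro i
    refine Fin.cases ?_ (fun i' => Fin.cases ?_ (fun i'' => i''.elim0) i') i
    · obtain ⟨w, hwI, hweq⟩ := hB0.1.1 (xs.length + 3) 0
      exact ⟨w, hwI, fun z => by simp only [hweq, hUG0]⟩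
    · obtain ⟨w, hwI, hweq⟩ := hB0.1.1 (xs.length + 3) 1
      exact ⟨w, hwI, fun z => by simp only [hweq, Fin.succ_zero_eq_one, hUG1]⟩
  have hUcEq : ∀ z : Fin (xs.length + 3) → ℕ, Uc z = u1 ![z 0, z 1] := by
    intro z
    rw [hUc]
    beta_reduce
    rw [vecPart_eq_some (g := ![z 0, z 1]) ?_, Part.bind_some]
    intro i
    refine Fin.cases ?_ (fun i' => Fin.cases ?_ (fun i'' => i''.elim0) i') i
    · rw [hUG0]; rfl
    · rw [Fin.succ_zero_eq_one, hUG1]; rfl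
  set FG : Fin (xs.length + 2) → PFn (xs.length + 3) :=
    Fin.cons (α := fun _ => PFn (xs.length + 3)) Uc
      (fun i => fun z => Part.some (z i.succ.succ)) with hFG
  have hFG0 : FG 0 = Uc := by rw [hFG, Fin.cons_zero]
  have hFGs : ∀ i : Fin (xs.length + 1),
      FG i.succ = fun z => Part.some (z i.succ.succ) := by
    intro i; rw [hFG, Fin.cons_succ]
  set F : PFn (xs.length + 3) := fun z => (vecPart fun i => FG i z).bind uN with hF
  have hFV : V.IsV (xs.length + 3) F := by
    refine comp1 V hB0.2.1 (xs.length + 1) (xs.length + 3) uN huNV FG ?_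
    intro i
    refine Fin.cases ?_ (fun i' => ?_) i
    · rw [hFG0]; exact hUcV
    · rw [hFGs]; exact hB0.1.1 (xs.length + 3) i'.succ.succ
  obtain ⟨τ, hτI, hτeq⟩ := hFV
  set hG : Fin 2 → PFn 1 :=
    Fin.cons (α := fun _ => PFn 1) (fun _ => Part.some τ)
      (Fin.cons (α := fun _ => PFn 1) (fun y => Part.some (y 0)) Fin.elim0) with hhG
  have hhG0 : ∀ z, hG 0 z = Part.some τ := fun z => by rw [hhG, Fin.cons_zero]
  have hhG1 : ∀ z, hG 1 z = Part.some (z 0) := fun z => by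
    rw [hhG, h12, Fin.cons_succ, Fin.cons_zero]
  set hfun : PFn 1 := fun z => (vecPart fun i => hG i z).bind SN1 with hhfun
  have hhV : V.IsV 1 hfun := by
    refine comp1 V hB0.2.1 1 1 SN1 hSN1V hG ?_
    intro i
    refine Fin.cases ?_ (fun i' => Fin.cases ?_ (fun i'' => i''.elim0) i') i
    · obtain ⟨w, hwI, hweq⟩ := constIsV V hB0 1 τ
      exact ⟨w, hwI, fun z => by simp only [hweq, hhG0]⟩
    · obtain ⟨w, hwI, hweq⟩ := hB0.1.1 1 0
      exact ⟨w, hwI, fun z => by simp only [hweq, Fin.succ_zero_eq_one, hhG1]⟩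
  have hhval : ∀ e : ℕ, hfun ![e] = SN1 ![τ, e] := by
    intro e
    rw [hhfun]
    beta_reduce
    rw [vecPart_eq_some (g := ![τ, e]) ?_, Part.bind_some]
    intro i
    refine Fin.cases ?_ (fun i' => Fin.cases ?_ (fun i'' => i''.elim0) i') i
    · rw [hhG0]; rfl
    · rw [Fin.succ_zero_eq_one, hhG1]; rfl
  refine ⟨gfun, hfun, hgV, hhV, ?_⟩
  intro M hM f ρ hρ e
  constructor
  · -- part (a)
    intro hRz
    have hRz2 : Rz V M f ((y :: xs).foldr Fml.all (B.imp C)) ρ e := hRz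
    obtain ⟨heI, hcl⟩ := (blockRz V M f B C (y :: xs) ρ e).mp hRz2
    simp only [List.length_cons] at heI hcl
    obtain ⟨gv, hgv1, hgv2, hgv3⟩ := hS1 σ hσI e
    refine ⟨gv, by rw [hgval e]; exact hgv1, hgv2, ?_⟩
    intro a haM
    obtain ⟨v, hv1, hv2, hv3⟩ := hSN e heI a
    refine ⟨v, ?_, ?_⟩
    · rw [hgv3 ![a], cons_vec1, hσeq]
      exact hv1
    · refine (blockRz V M f B C xs (Function.update ρ y a) v).mpr ⟨hv2, ?_⟩
      intro a' ha' s hsB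
      have henv : updEnv ρ (y :: xs) (List.ofFn (Fin.cons a a')) =
          updEnv (Function.update ρ y a) xs (List.ofFn a') := by
        rw [ofFn_cons, updEnv_cons]
      have hmem : ∀ i, (Fin.cons a a' : Fin (xs.length + 1) → ℕ) i ∈ M := by
        intro i
        refine Fin.cases ?_ (fun j => ?_) i
        · rw [Fin.cons_zero]; exact haM
        · rw [Fin.cons_succ]; exact ha' j
      obtain ⟨w, hw1, hw2⟩ := hcl (Fin.cons a a') hmem s (by rw [henv]; exact hsB)
      refine ⟨w, ?_, ?_⟩
      · rw [hv3, Fin.cons_snoc_eq_snoc_cons]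
        exact hw1
      · rw [henv] at hw2
        exact hw2
  · -- part (b)
    rintro ⟨heI1, hpt⟩
    obtain ⟨hv, hhv1, hhv2, hhv3⟩ := hSN1 τ hτI e
    refine ⟨hv, by rw [hhval e]; exact hhv1, ?_⟩
    have goal2 : Rz V M f ((y :: xs).foldr Fml.all (B.imp C)) ρ hv := by
      refine (blockRz V M f B C (y :: xs) ρ hv).mpr ?_
      simp only [List.length_cons]
      refine ⟨hhv2, ?_⟩
      intro a haM s hsB
      obtain ⟨v0, hval0, hrz0⟩ := hpt (a 0) (haM 0)
      obtain ⟨hv0I, hv0cl⟩ :=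
        (blockRz V M f B C xs (Function.update ρ y (a 0)) v0).mp hrz0
      have henv2 : updEnv ρ (y :: xs) (List.ofFn a) =
          updEnv (Function.update ρ y (a 0)) xs (List.ofFn (Fin.tail a)) := by
        have hofn : List.ofFn a = a 0 :: List.ofFn (Fin.tail a) := by
          rw [← ofFn_cons, Fin.cons_self_tail]
        rw [hofn, updEnv_cons]
      obtain ⟨w, hw1, hw2⟩ := hv0cl (Fin.tail a) (fun i => haM i.succ) s
        (by rw [← henv2]; exact hsB)
      refine ⟨w, ?_, ?_⟩
      · rw [hhv3 (Fin.snoc a s), hτeq, hF]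
        beta_reduce
        have hvec : (vecPart fun i => FG i (Fin.cons e (Fin.snoc a s))) =
            Part.some (Fin.cons v0 (Fin.snoc (Fin.tail a) s)) := by
          apply vecPart_eq_some
          intro i
          refine Fin.cases ?_ (fun i' => ?_) i
          · rw [Fin.cons_zero, hFG0, hUcEq, Fin.cons_zero, h1n, Fin.cons_succ]
            rw [show ((Fin.snoc a s : Fin (xs.length + 2) → ℕ) 0) = a 0 by
              rw [← Fin.castSucc_zero, Fin.snoc_castSucc]]
            rw [← cons_vec1, hu1O e heI1 ![a 0] (by rw [hval0]; trivial), hval0]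
          · rw [Fin.cons_succ, hFGs]
            beta_reduce
            rw [Fin.cons_succ]
            rw [show ((Fin.snoc a s : Fin (xs.length + 2) → ℕ) i'.succ) =
              Fin.tail (Fin.snoc a s : Fin (xs.length + 2) → ℕ) i' from rfl]
            rw [tail_snoc]
        rw [hvec, Part.bind_some]
        rw [huNO v0 hv0I _ (by rw [hw1]; trivial), hw1]
      · rw [henv2]
        exact hw2
    exact goal2

end GenReal
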